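/- arXiv:2206.06009 — 2 statements merged into one kernel-verified Lean document; each statement's English description precedes it below -/
import Mathlib

section
/- For a fixed kernel P and two policies π, π' with shared initial distribution, the time-t state marginals satisfy Σ_s |p^{P,π'}_t(s) - p^{P,π}_t(s)| ≤ 2 t δ₂, where δ₂ = max_s D_TV(π'(·|s), π(·|s)). -/
open scoped BigOperators

variable {S A : Type*}

/-- `P` is a transition kernel: for each state-action pair, a probability
distribution over next states. -/
def IsKernel [Fintype S] (P : S → A → S → ℝ) : Prop :=
  ∀ s a, (∀ s', 0 ≤ P s a s') ∧ ∑ s', P s a s' = 1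

/-- `π` is a stochastic policy: for each state, a probability distribution over actions. -/
def IsPolicy [Fintype A] (π : S → A → ℝ) : Prop :=
  ∀ s, (∀ a, 0 ≤ π s a) ∧ ∑ a, π s a = 1

/-- `ρ` is a probability distribution over states. -/
def IsDist [Fintype S] (ρ : S → ℝ) : Prop :=
  (∀ s, 0 ≤ ρ s) ∧ ∑ s, ρ s = 1

/-- One step of the state-marginal evolution under kernel `P` and policy `π`. -/
noncomputable def stepMarginal [Fintype S] [Fintype A]
    (P : S → A → S → ℝ) (π : S → A → ℝ) (μ : S → ℝ) : S → ℝ :=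
  fun s' => ∑ s, μ s * ∑ a, π s a * P s a s'

/-- The time-`t` state marginal under kernel `P`, policy `π`, initial distribution `ρ`. -/
noncomputable def marginal [Fintype S] [Fintype A]
    (P : S → A → S → ℝ) (π : S → A → ℝ) (ρ : S → ℝ) : ℕ → S → ℝ
  | 0 => ρ
  | t + 1 => stepMarginal P π (marginal P π ρ t)

/-- Expected one-step reward when the current state is distributed according to `μ`. -/
noncomputable def expReward [Fintype S] [Fintype A]
    (P : S → A → S → ℝ) (π : S → A → ℝ) (r : S → A → S → ℝ) (μ : S → ℝ) : ℝ :=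
  ∑ s, μ s * ∑ a, π s a * ∑ s', P s a s' * r s a s'

/-- The expected discounted return `J(P, π)` with initial distribution `ρ`. -/
noncomputable def Jret [Fintype S] [Fintype A]
    (P : S → A → S → ℝ) (π : S → A → ℝ) (r : S → A → S → ℝ) (γ : ℝ) (ρ : S → ℝ) : ℝ :=
  ∑' t : ℕ, γ ^ t * expReward P π r (marginal P π ρ t)

/-- The value function `V^{P,π}(s)`: the return starting from state `s`. -/
noncomputable def Vval [Fintype S] [Fintype A] [DecidableEq S]
    (P : S → A → S → ℝ) (π : S → A → ℝ) (r : S → A → S → ℝ) (γ : ℝ) (s : S) : ℝ :=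
  Jret P π r γ (fun s' => if s' = s then 1 else 0)

/-- The state-action value function `Q^{P,π}(s,a)`. -/
noncomputable def Qval [Fintype S] [Fintype A] [DecidableEq S]
    (P : S → A → S → ℝ) (π : S → A → ℝ) (r : S → A → S → ℝ) (γ : ℝ) (s : S) (a : A) : ℝ :=
  ∑ s', P s a s' * (r s a s' + γ * Vval P π r γ s')

/-- The advantage function `A^{P,π}(s,a) = Q^{P,π}(s,a) - V^{P,π}(s)`. -/
noncomputable def Aval [Fintype S] [Fintype A] [DecidableEq S]
    (P : S → A → S → ℝ) (π : S → A → ℝ) (r : S → A → S → ℝ) (γ : ℝ) (s : S) (a : A) : ℝ :=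
  Qval P π r γ s a - Vval P π r γ s

lemma isDist_marginal [Fintype S] [Fintype A]
    (P : S → A → S → ℝ) (π : S → A → ℝ) (ρ : S → ℝ)
    (hP : IsKernel P) (hπ : IsPolicy π) (hρ : IsDist ρ) :
    ∀ t, IsDist (marginal P π ρ t) := by
  intro t
  induction t with
  | zero => exact hρ
  | succ t ih =>
    constructor
    · intro s'
      apply Finset.sum_nonneg
      intro s _
      exact mul_nonneg (ih.1 s) (Finset.sum_nonneg fun a _ =>
        mul_nonneg ((hπ s).1 a) ((hP s a).1 s'))
    · show ∑ s', ∑ s, marginal P π ρ t s * ∑ a, π s a * P s a s' = 1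
      rw [Finset.sum_comm]
      have : ∀ s ∈ Finset.univ, (∑ s', marginal P π ρ t s * ∑ a, π s a * P s a s')
          = marginal P π ρ t s := by
        intro s _
        rw [← Finset.mul_sum, Finset.sum_comm]
        have : ∀ a ∈ Finset.univ, (∑ s', π s a * P s a s') = π s a := by
          intro a _
          rw [← Finset.mul_sum, (hP s a).2, mul_one]
        rw [Finset.sum_congr rfl this, (hπ s).2, mul_one]
      rw [Finset.sum_congr rfl this, ih.2]

/-- the time-`t` state marginals under two policies differ by at most `2 t δ₂`
in total variation, where `δ₂` bounds the TV distance between the policies. -/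
theorem marginal_diff_policies [Fintype S] [Fintype A]
    (P : S → A → S → ℝ) (π π' : S → A → ℝ) (ρ : S → ℝ) (δ₂ : ℝ)
    (hP : IsKernel P) (hπ : IsPolicy π) (hπ' : IsPolicy π') (hρ : IsDist ρ)
    (hδ : ∀ s, (1 / 2) * ∑ a, |π' s a - π s a| ≤ δ₂) :
    ∀ t : ℕ, ∑ s, |marginal P π' ρ t s - marginal P π ρ t s| ≤ 2 * (t : ℝ) * δ₂ := by
  intro t
  induction t with
  | zero => simp [marginal]
  | succ t ih =>
    set μ := marginal P π ρ t with hμ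
    set μ' := marginal P π' ρ t with hμ'
    have hdμ := isDist_marginal P π ρ hP hπ hρ t
    have hdμ' := isDist_marginal P π' ρ hP hπ' hρ t
    have key : ∀ s', marginal P π' ρ (t+1) s' - marginal P π ρ (t+1) s'
        = (∑ s, (μ' s - μ s) * ∑ a, π' s a * P s a s')
          + ∑ s, μ s * ∑ a, (π' s a - π s a) * P s a s' := by
      intro s'
      show (∑ s, μ' s * ∑ a, π' s a * P s a s') - (∑ s, μ s * ∑ a, π s a * P s a s') = _
      rw [← Finset.sum_sub_distrib, ← Finset.sum_add_distrib]
      apply Finset.sum_congr rfl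
      intro s _
      have hsub : ∑ a, (π' s a - π s a) * P s a s'
          = (∑ a, π' s a * P s a s') - ∑ a, π s a * P s a s' := by
        rw [← Finset.sum_sub_distrib]
        exact Finset.sum_congr rfl fun a _ => by ring
      rw [hsub]; ring
    have h1 : ∑ s', |∑ s, (μ' s - μ s) * ∑ a, π' s a * P s a s'|
        ≤ 2 * (t : ℝ) * δ₂ := by
      calc ∑ s', |∑ s, (μ' s - μ s) * ∑ a, π' s a * P s a s'|
          ≤ ∑ s', ∑ s, |μ' s - μ s| * (∑ a, π' s a * P s a s') := by
            apply Finset.sum_le_sum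
            intro s' _
            refine (Finset.abs_sum_le_sum_abs _ _).trans ?_
            apply Finset.sum_le_sum
            intro s _
            rw [abs_mul]
            gcongr
            exact le_of_eq (abs_of_nonneg (Finset.sum_nonneg fun a _ =>
              mul_nonneg ((hπ' s).1 a) ((hP s a).1 s')))
        _ = ∑ s, |μ' s - μ s| := by
            rw [Finset.sum_comm]
            apply Finset.sum_congr rfl
            intro s _
            rw [← Finset.mul_sum, Finset.sum_comm]
            have : ∀ a ∈ Finset.univ, (∑ s', π' s a * P s a s') = π' s a := fun a _ => by
              rw [← Finset.mul_sum, (hP s a).2, mul_one]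
            rw [Finset.sum_congr rfl this, (hπ' s).2, mul_one]
        _ ≤ 2 * (t : ℝ) * δ₂ := ih
    have h2 : ∑ s', |∑ s, μ s * ∑ a, (π' s a - π s a) * P s a s'| ≤ 2 * δ₂ := by
      calc ∑ s', |∑ s, μ s * ∑ a, (π' s a - π s a) * P s a s'|
          ≤ ∑ s', ∑ s, μ s * ∑ a, |π' s a - π s a| * P s a s' := by
            apply Finset.sum_le_sum
            intro s' _
            refine (Finset.abs_sum_le_sum_abs _ _).trans ?_
            apply Finset.sum_le_sum
            intro s _
            rw [abs_mul, abs_of_nonneg (hdμ.1 s)]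
            gcongr
            · exact hdμ.1 s
            refine (Finset.abs_sum_le_sum_abs _ _).trans ?_
            apply Finset.sum_le_sum
            intro a _
            rw [abs_mul, abs_of_nonneg ((hP s a).1 s')]
        _ = ∑ s, μ s * ∑ a, |π' s a - π s a| := by
            rw [Finset.sum_comm]
            apply Finset.sum_congr rfl
            intro s _
            rw [← Finset.mul_sum, Finset.sum_comm]
            congr 1
            apply Finset.sum_congr rfl
            intro a _
            rw [← Finset.mul_sum, (hP s a).2, mul_one]
        _ ≤ ∑ s, μ s * (2 * δ₂) := by
            apply Finset.sum_le_sum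
            intro s _
            have := hδ s
            have h2δ : ∑ a, |π' s a - π s a| ≤ 2 * δ₂ := by linarith
            exact mul_le_mul_of_nonneg_left h2δ (hdμ.1 s)
        _ = 2 * δ₂ := by rw [← Finset.sum_mul, hdμ.2, one_mul]
    calc ∑ s', |marginal P π' ρ (t+1) s' - marginal P π ρ (t+1) s'|
        ≤ ∑ s', (|∑ s, (μ' s - μ s) * ∑ a, π' s a * P s a s'|
            + |∑ s, μ s * ∑ a, (π' s a - π s a) * P s a s'|) := by
          apply Finset.sum_le_sum
          intro s' _
          rw [key s']
          exact abs_add_le _ _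
      _ = (∑ s', |∑ s, (μ' s - μ s) * ∑ a, π' s a * P s a s'|)
            + ∑ s', |∑ s, μ s * ∑ a, (π' s a - π s a) * P s a s'| :=
          Finset.sum_add_distrib
      _ ≤ 2 * (t : ℝ) * δ₂ + 2 * δ₂ := add_le_add h1 h2
      _ = 2 * ((t : ℕ) + 1 : ℝ) * δ₂ := by ring
      _ = 2 * (((t + 1 : ℕ)) : ℝ) * δ₂ := by push_cast; ring
end

section
/- For a fixed kernel P and two policies π, π' with max total variation distance δ₂ = max_s D_TV(π'(·|s), π(·|s)), discount γ∈[0,1), and rewards bounded by r_max: |V^{P,π'}(s_t) - V^{P,π}(s_t)| ≤ min( 2 r_max δ₂ (tγ(1-γ)+1)/(1-γ)², 2 r_max/(1-γ) ) for any state s_t at time t. -/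
open scoped BigOperators

variable {S A : Type*}

/-!
Write `e u` and `e' u` for the expected rewards at time `u` under `π` and `π'`. Their difference
is at most `r_max` times the `ℓ¹` distance of the two state marginals plus `2 r_max δ₂`, and each
transition adds at most `2 δ₂` to that distance, so `|e' u - e u| ≤ 2 r_max δ₂ (u + 1)`; summing
against `γ ^ u` gives `2 r_max δ₂ / (1 - γ) ^ 2`. The other bound is the crude one,
`|e' u - e u| ≤ 2 r_max`.
-/

section FiniteSums

variable {ι κ : Type*} [Fintype ι] [Fintype κ]

lemma sum_mul_le_of_sum_eq_one {w x : ι → ℝ} {c : ℝ} (hw : ∀ i, 0 ≤ w i) (hw1 : ∑ i, w i = 1)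
    (hx : ∀ i, x i ≤ c) : ∑ i, w i * x i ≤ c :=
  calc ∑ i, w i * x i ≤ ∑ i, w i * c :=
        Finset.sum_le_sum fun i _ => mul_le_mul_of_nonneg_left (hx i) (hw i)
    _ = c := by rw [← Finset.sum_mul, hw1, one_mul]

lemma abs_sum_mul_le_of_sum_eq_one {w x : ι → ℝ} {c : ℝ} (hw : ∀ i, 0 ≤ w i)
    (hw1 : ∑ i, w i = 1) (hx : ∀ i, |x i| ≤ c) : |∑ i, w i * x i| ≤ c :=
  calc |∑ i, w i * x i| ≤ ∑ i, |w i * x i| := Finset.abs_sum_le_sum_abs _ _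
    _ = ∑ i, w i * |x i| := by simp only [abs_mul, abs_of_nonneg (hw _)]
    _ ≤ c := sum_mul_le_of_sum_eq_one hw hw1 hx

lemma abs_sum_mul_sub_sum_mul_le {w w' x : ι → ℝ} {c : ℝ} (hx : ∀ i, |x i| ≤ c) :
    |∑ i, w' i * x i - ∑ i, w i * x i| ≤ c * ∑ i, |w' i - w i| :=
  calc |∑ i, w' i * x i - ∑ i, w i * x i| = |∑ i, (w' i - w i) * x i| := by
        simp only [sub_mul, Finset.sum_sub_distrib]
    _ ≤ ∑ i, |w' i - w i| * |x i| := by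
        simpa only [abs_mul] using Finset.abs_sum_le_sum_abs (fun i => (w' i - w i) * x i) _
    _ ≤ ∑ i, |w' i - w i| * c :=
        Finset.sum_le_sum fun i _ => mul_le_mul_of_nonneg_left (hx i) (abs_nonneg _)
    _ = c * ∑ i, |w' i - w i| := by rw [← Finset.sum_mul, mul_comm]

lemma sum_abs_sum_mul_le (ν : ι → ℝ) (K : ι → κ → ℝ) :
    ∑ j, |∑ i, ν i * K i j| ≤ ∑ i, |ν i| * ∑ j, |K i j| :=
  calc ∑ j, |∑ i, ν i * K i j| ≤ ∑ j, ∑ i, |ν i| * |K i j| :=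
        Finset.sum_le_sum fun j _ => by
          simpa only [abs_mul] using Finset.abs_sum_le_sum_abs (fun i => ν i * K i j) _
    _ = ∑ i, |ν i| * ∑ j, |K i j| := by rw [Finset.sum_comm]; simp only [Finset.mul_sum]

lemma sum_abs_sum_mul_le_of_stochastic (ν : ι → ℝ) {K : ι → κ → ℝ} (hK : ∀ i j, 0 ≤ K i j)
    (hK1 : ∀ i, ∑ j, K i j = 1) : ∑ j, |∑ i, ν i * K i j| ≤ ∑ i, |ν i| := by
  simpa only [abs_of_nonneg (hK _ _), hK1, mul_one] using sum_abs_sum_mul_le ν K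

end FiniteSums

section MDP

variable [Fintype S] [Fintype A] {P : S → A → S → ℝ} {π π' : S → A → ℝ}

lemma sum_policy_mul_kernel_nonneg (hP : IsKernel P) (hπ : IsPolicy π) (s s' : S) :
    0 ≤ ∑ a, π s a * P s a s' :=
  Finset.sum_nonneg fun a _ => mul_nonneg ((hπ s).1 a) ((hP s a).1 s')

lemma sum_sum_policy_mul_kernel (hP : IsKernel P) (hπ : IsPolicy π) (s : S) :
    ∑ s', ∑ a, π s a * P s a s' = 1 := by
  rw [Finset.sum_comm]
  simp only [← Finset.mul_sum, (hP s _).2, mul_one, (hπ s).2]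

lemma IsDist.stepMarginal {μ : S → ℝ} (hP : IsKernel P) (hπ : IsPolicy π) (hμ : IsDist μ) :
    IsDist (stepMarginal P π μ) := by
  refine ⟨fun s' => Finset.sum_nonneg fun s _ =>
    mul_nonneg (hμ.1 s) (sum_policy_mul_kernel_nonneg hP hπ s s'), ?_⟩
  simp only [_root_.stepMarginal]
  rw [Finset.sum_comm]
  simp only [← Finset.mul_sum, sum_sum_policy_mul_kernel hP hπ, mul_one, hμ.2]

lemma IsDist.marginal {ρ : S → ℝ} (hP : IsKernel P) (hπ : IsPolicy π) (hρ : IsDist ρ) :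
    ∀ t, IsDist (marginal P π ρ t)
  | 0 => hρ
  | t + 1 => (IsDist.marginal hP hπ hρ t).stepMarginal hP hπ

lemma sum_abs_stepMarginal_sub_le {μ μ' : S → ℝ} (hP : IsKernel P) (hπ' : IsPolicy π')
    (hμ : ∀ s, 0 ≤ μ s) :
    ∑ s', |stepMarginal P π' μ' s' - stepMarginal P π μ s'| ≤
      ∑ s, |μ' s - μ s| + ∑ s, μ s * ∑ a, |π' s a - π s a| := by
  have hsplit : ∀ s', stepMarginal P π' μ' s' - stepMarginal P π μ s' =
      ∑ s, (μ' s - μ s) * ∑ a, π' s a * P s a s' +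
        ∑ s, μ s * ∑ a, (π' s a - π s a) * P s a s' := by
    intro s'
    simp only [_root_.stepMarginal, sub_mul, mul_sub, Finset.sum_sub_distrib]
    ring
  have hpolicy : ∀ s, ∑ s', |∑ a, (π' s a - π s a) * P s a s'| ≤ ∑ a, |π' s a - π s a| :=
    fun s => sum_abs_sum_mul_le_of_stochastic _ (hP s · |>.1) (hP s · |>.2)
  calc ∑ s', |stepMarginal P π' μ' s' - stepMarginal P π μ s'|
      ≤ ∑ s', |∑ s, (μ' s - μ s) * ∑ a, π' s a * P s a s'| +
          ∑ s', |∑ s, μ s * ∑ a, (π' s a - π s a) * P s a s'| := by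
        rw [← Finset.sum_add_distrib]
        exact Finset.sum_le_sum fun s' _ => hsplit s' ▸ abs_add_le _ _
    _ ≤ ∑ s, |μ' s - μ s| + ∑ s, |μ s| * ∑ s', |∑ a, (π' s a - π s a) * P s a s'| :=
        add_le_add (sum_abs_sum_mul_le_of_stochastic _ (sum_policy_mul_kernel_nonneg hP hπ')
          (sum_sum_policy_mul_kernel hP hπ')) (sum_abs_sum_mul_le _ _)
    _ ≤ ∑ s, |μ' s - μ s| + ∑ s, μ s * ∑ a, |π' s a - π s a| := by
        refine add_le_add le_rfl (Finset.sum_le_sum fun s _ => ?_)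
        rw [abs_of_nonneg (hμ s)]
        exact mul_le_mul_of_nonneg_left (hpolicy s) (hμ s)

lemma sum_abs_marginal_sub_le {ρ : S → ℝ} {ε : ℝ} (hP : IsKernel P) (hπ : IsPolicy π)
    (hπ' : IsPolicy π') (hρ : IsDist ρ) (hε : ∀ s, ∑ a, |π' s a - π s a| ≤ ε) :
    ∀ t : ℕ, ∑ s, |marginal P π' ρ t s - marginal P π ρ t s| ≤ t * ε
  | 0 => by simp [marginal]
  | t + 1 => by
    have hμ := IsDist.marginal hP hπ hρ t
    calc ∑ s, |marginal P π' ρ (t + 1) s - marginal P π ρ (t + 1) s|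
        ≤ ∑ s, |marginal P π' ρ t s - marginal P π ρ t s| +
            ∑ s, marginal P π ρ t s * ∑ a, |π' s a - π s a| :=
          sum_abs_stepMarginal_sub_le hP hπ' hμ.1
      _ ≤ t * ε + ε :=
          add_le_add (sum_abs_marginal_sub_le hP hπ hπ' hρ hε t)
            (sum_mul_le_of_sum_eq_one hμ.1 hμ.2 hε)
      _ = (t + 1 : ℕ) * ε := by push_cast; ring

end MDP

section Reward

variable [Fintype S] [Fintype A] {P : S → A → S → ℝ} {π π' : S → A → ℝ} {r : S → A → S → ℝ}
  {rmax : ℝ}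

lemma abs_expReward_le {μ : S → ℝ} (hP : IsKernel P) (hπ : IsPolicy π) (hμ : IsDist μ)
    (hr : ∀ s a s', |r s a s'| ≤ rmax) : |expReward P π r μ| ≤ rmax :=
  abs_sum_mul_le_of_sum_eq_one hμ.1 hμ.2 fun s =>
    abs_sum_mul_le_of_sum_eq_one (hπ s).1 (hπ s).2 fun a =>
      abs_sum_mul_le_of_sum_eq_one (hP s a).1 (hP s a).2 (hr s a)

lemma abs_expReward_sub_le {μ μ' : S → ℝ} (hP : IsKernel P) (hπ' : IsPolicy π')
    (hμ : ∀ s, 0 ≤ μ s) (hr : ∀ s a s', |r s a s'| ≤ rmax) :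
    |expReward P π' r μ' - expReward P π r μ| ≤
      rmax * (∑ s, |μ' s - μ s| + ∑ s, μ s * ∑ a, |π' s a - π s a|) := by
  set R : S → A → ℝ := fun s a => ∑ s', P s a s' * r s a s'
  have hR : ∀ s a, |R s a| ≤ rmax := fun s a =>
    abs_sum_mul_le_of_sum_eq_one (hP s a).1 (hP s a).2 (hr s a)
  have hsplit : expReward P π' r μ' - expReward P π r μ =
      (∑ s, μ' s * ∑ a, π' s a * R s a - ∑ s, μ s * ∑ a, π' s a * R s a) +
        ∑ s, μ s * (∑ a, π' s a * R s a - ∑ a, π s a * R s a) := by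
    simp only [expReward, R, mul_sub, Finset.sum_sub_distrib]
    ring
  have hstate : |∑ s, μ' s * ∑ a, π' s a * R s a - ∑ s, μ s * ∑ a, π' s a * R s a| ≤
      rmax * ∑ s, |μ' s - μ s| :=
    abs_sum_mul_sub_sum_mul_le fun s => abs_sum_mul_le_of_sum_eq_one (hπ' s).1 (hπ' s).2 (hR s)
  have hpolicy : |∑ s, μ s * (∑ a, π' s a * R s a - ∑ a, π s a * R s a)| ≤
      rmax * ∑ s, μ s * ∑ a, |π' s a - π s a| :=
    calc _ ≤ ∑ s, |μ s * (∑ a, π' s a * R s a - ∑ a, π s a * R s a)| :=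
          Finset.abs_sum_le_sum_abs _ _
      _ ≤ ∑ s, μ s * (rmax * ∑ a, |π' s a - π s a|) := Finset.sum_le_sum fun s _ => by
          rw [abs_mul, abs_of_nonneg (hμ s)]
          exact mul_le_mul_of_nonneg_left (abs_sum_mul_sub_sum_mul_le (hR s)) (hμ s)
      _ = rmax * ∑ s, μ s * ∑ a, |π' s a - π s a| := by
          rw [Finset.mul_sum]; simp only [mul_left_comm]
  rw [hsplit, mul_add]
  exact (abs_add_le _ _).trans (add_le_add hstate hpolicy)

lemma abs_expReward_marginal_sub_le_two_mul {ρ : S → ℝ} (hP : IsKernel P) (hπ : IsPolicy π)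
    (hπ' : IsPolicy π') (hρ : IsDist ρ) (hr : ∀ s a s', |r s a s'| ≤ rmax) (t : ℕ) :
    |expReward P π' r (marginal P π' ρ t) - expReward P π r (marginal P π ρ t)| ≤ 2 * rmax :=
  (abs_sub _ _).trans <| by
    linarith [abs_expReward_le hP hπ' (IsDist.marginal hP hπ' hρ t) hr,
      abs_expReward_le hP hπ (IsDist.marginal hP hπ hρ t) hr]

lemma abs_expReward_marginal_sub_le {ρ : S → ℝ} {ε : ℝ} (hP : IsKernel P) (hπ : IsPolicy π)
    (hπ' : IsPolicy π') (hρ : IsDist ρ) (hr : ∀ s a s', |r s a s'| ≤ rmax)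
    (hε : ∀ s, ∑ a, |π' s a - π s a| ≤ ε) (t : ℕ) :
    |expReward P π' r (marginal P π' ρ t) - expReward P π r (marginal P π ρ t)| ≤
      rmax * ε * (t + 1) := by
  have hμ := IsDist.marginal hP hπ hρ t
  have hrmax : 0 ≤ rmax := (abs_nonneg _).trans (abs_expReward_le hP hπ hμ hr)
  calc _ ≤ rmax * (∑ s, |marginal P π' ρ t s - marginal P π ρ t s| +
          ∑ s, marginal P π ρ t s * ∑ a, |π' s a - π s a|) :=
        abs_expReward_sub_le hP hπ' hμ.1 hr
    _ ≤ rmax * (t * ε + ε) := mul_le_mul_of_nonneg_left (add_le_add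
        (sum_abs_marginal_sub_le hP hπ hπ' hρ hε t) (sum_mul_le_of_sum_eq_one hμ.1 hμ.2 hε)) hrmax
    _ = rmax * ε * (t + 1) := by ring

end Reward

lemma hasSum_succ_mul_geometric_of_norm_lt_one {𝕜 : Type*} [NormedDivisionRing 𝕜]
    [HasSummableGeomSeries 𝕜] {r : 𝕜} (hr : ‖r‖ < 1) :
    HasSum (fun n : ℕ => ((n : 𝕜) + 1) * r ^ n) (1 / (1 - r) ^ 2) := by
  simpa using hasSum_choose_mul_geometric_of_norm_lt_one 1 hr

lemma summable_geometric_mul_of_abs_le {γ C : ℝ} {f : ℕ → ℝ} (hγ0 : 0 ≤ γ) (hγ1 : γ < 1)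
    (hf : ∀ u, |f u| ≤ C) : Summable fun u => γ ^ u * f u := by
  refine .of_norm_bounded ((summable_geometric_of_lt_one hγ0 hγ1).mul_right C) fun u => ?_
  rw [Real.norm_eq_abs, abs_mul, abs_of_nonneg (pow_nonneg hγ0 u)]
  exact mul_le_mul_of_nonneg_left (hf u) (pow_nonneg hγ0 u)

lemma abs_Jret_sub_le [Fintype S] [Fintype A] {P : S → A → S → ℝ} {π π' : S → A → ℝ}
    {r : S → A → S → ℝ} {γ rmax B : ℝ} {ρ : S → ℝ} {g : ℕ → ℝ} (hP : IsKernel P)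
    (hπ : IsPolicy π) (hπ' : IsPolicy π') (hρ : IsDist ρ) (hγ0 : 0 ≤ γ) (hγ1 : γ < 1)
    (hr : ∀ s a s', |r s a s'| ≤ rmax) (hg : HasSum (fun u => g u * γ ^ u) B)
    (hdiff : ∀ u, |expReward P π' r (marginal P π' ρ u) - expReward P π r (marginal P π ρ u)|
      ≤ g u) :
    |Jret P π' r γ ρ - Jret P π r γ ρ| ≤ B := by
  have hsummable : ∀ {π}, IsPolicy π →
      Summable fun u => γ ^ u * expReward P π r (marginal P π ρ u) := fun hπ =>
    summable_geometric_mul_of_abs_le hγ0 hγ1 fun u =>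
      abs_expReward_le hP hπ (IsDist.marginal hP hπ hρ u) hr
  rw [Jret, Jret, ← (hsummable hπ').tsum_sub (hsummable hπ), ← Real.norm_eq_abs]
  refine tsum_of_norm_bounded hg fun u => ?_
  rw [Real.norm_eq_abs, ← mul_sub, abs_mul, abs_of_nonneg (pow_nonneg hγ0 u), mul_comm]
  exact mul_le_mul_of_nonneg_right (hdiff u) (pow_nonneg hγ0 u)

/-- value difference bound between two policies for a state appearing
at time `t`. -/
theorem value_diff_policies [Fintype S] [Fintype A] [DecidableEq S]
    (P : S → A → S → ℝ) (π π' : S → A → ℝ) (r : S → A → S → ℝ) (γ : ℝ)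
    (rmax δ₂ : ℝ)
    (hP : IsKernel P) (hπ : IsPolicy π) (hπ' : IsPolicy π')
    (hγ0 : 0 ≤ γ) (hγ1 : γ < 1)
    (hr : ∀ s a s', |r s a s'| ≤ rmax)
    (hδ : ∀ s, (1 / 2) * ∑ a, |π' s a - π s a| ≤ δ₂) :
    ∀ (t : ℕ) (s : S),
      |Vval P π' r γ s - Vval P π r γ s| ≤
        min (2 * rmax * δ₂ * ((t : ℝ) * γ * (1 - γ) + 1) / (1 - γ) ^ 2)
          (2 * rmax / (1 - γ)) := by
  intro t s
  set ρ : S → ℝ := fun s' => if s' = s then 1 else 0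
  have hρ : IsDist ρ := ⟨fun s' => by dsimp only [ρ]; split_ifs <;> norm_num, by simp [ρ]⟩
  have hε : ∀ s, ∑ a, |π' s a - π s a| ≤ 2 * δ₂ := fun s => by linarith [hδ s]
  have hrmax : 0 ≤ rmax := (abs_nonneg _).trans (abs_expReward_le hP hπ hρ hr)
  have hδ₂ : 0 ≤ δ₂ := le_trans (by positivity) (hδ s)
  have hγ : ‖γ‖ < 1 := by rwa [Real.norm_of_nonneg hγ0]
  refine le_min ?_ ?_
  · calc |Vval P π' r γ s - Vval P π r γ s| ≤ rmax * (2 * δ₂) * (1 / (1 - γ) ^ 2) :=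
          abs_Jret_sub_le hP hπ hπ' hρ hγ0 hγ1 hr
            (by simpa only [mul_assoc] using
              (hasSum_succ_mul_geometric_of_norm_lt_one hγ).mul_left (rmax * (2 * δ₂)))
            (abs_expReward_marginal_sub_le hP hπ hπ' hρ hr hε)
      -- the bound already holds with `t = 0`; the factor `t γ (1 - γ) + 1 ≥ 1` only weakens it
      _ ≤ 2 * rmax * δ₂ * ((t : ℝ) * γ * (1 - γ) + 1) / (1 - γ) ^ 2 := by
          have ht : 0 ≤ (t : ℝ) * γ * (1 - γ) := by have := sub_nonneg.2 hγ1.le; positivity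
          rw [mul_one_div, show rmax * (2 * δ₂) = 2 * rmax * δ₂ by ring]
          exact div_le_div_of_nonneg_right
            (le_mul_of_one_le_right (by positivity) (by linarith)) (by positivity)
  · calc |Vval P π' r γ s - Vval P π r γ s| ≤ 2 * rmax * (1 - γ)⁻¹ :=
          abs_Jret_sub_le hP hπ hπ' hρ hγ0 hγ1 hr
            ((hasSum_geometric_of_lt_one hγ0 hγ1).mul_left (2 * rmax))
            (abs_expReward_marginal_sub_le_two_mul hP hπ hπ' hρ hr)
      _ = 2 * rmax / (1 - γ) := (div_eq_mul_inv _ _).symm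
end
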